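/- arXiv:1104.2782 — 5 statements merged into one kernel-verified Lean document; each statement's English description precedes it below -/
import Mathlib

section
/- Let K be an algebraically closed field and a(T₁,T₂), b(T₁,T₂) ∈ K[T₁,T₂] homogeneous of the same degree d₀ with no common factors, so a and b have no common zero in P¹. Let F₁, F₂ ∈ K[X₁,X₂,X₃] be homogeneous of degree 2 with no common factor. Then the polynomial b(F₁(X),F₂(X))·X₁ − a(F₁(X),F₂(X))·X₂ is not identically zero. -/
/-!
Suppose `b(F)·X₀ = a(F)·X₁`. Since `X₀` and `X₁` are non-associate primes, `a(F) = X₀·c` and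
`b(F) = X₁·c` for some `c`. A common zero `x ≠ 0` of the coprime binary forms `a`, `b` would give
them the common linear factor `x₁T₀ − x₀T₁`, so their only common zero is `0`, and by the
Nullstellensatz some power of each `Tᵢ` lies in the ideal `(a, b)`. Substituting `Tᵢ ↦ Fᵢ`, the
common divisor `c` of `a(F)` and `b(F)` divides powers of the coprime `F₁` and `F₂`, hence is a
unit. Then `a(F)`, homogeneous of degree `2d₀`, is `X₀` times a nonzero constant, so `2d₀ = 1`.
-/

open MvPolynomial

namespace MvPolynomial

theorem exists_eq_X_mul_of_mul_X_eq_mul_X {σ R : Type*} [CommRing R] [IsDomain R]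
    {i j : σ} (hij : i ≠ j) {p q : MvPolynomial σ R} (h : p * X i = q * X j) :
    ∃ r, q = X i * r ∧ p = X j * r := by
  obtain ⟨r, rfl⟩ : X j ∣ p :=
    ((X_prime (R := R)).dvd_or_dvd ⟨q, by rw [h, mul_comm]⟩).resolve_right
      (by simpa using hij.symm)
  refine ⟨r, mul_left_cancel₀ (X_ne_zero j) ?_, rfl⟩
  rw [mul_comm, ← h]
  ring

namespace IsHomogeneous

theorem natDegree_aeval_X_one_le {R : Type*} [CommSemiring R] {q : MvPolynomial (Fin 2) R}
    {n : ℕ} (hq : q.IsHomogeneous n) :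
    (MvPolynomial.aeval ![(Polynomial.X : Polynomial R), 1] q).natDegree ≤ n := by
  rw [q.as_sum, map_sum]
  refine Polynomial.natDegree_sum_le_of_forall_le _ _ fun m hm => ?_
  have hmn : m 0 + m 1 = n := by
    simpa [Finsupp.weight_apply, Finsupp.sum_fintype] using hq (mem_support_iff.mp hm)
  rw [aeval_monomial, Finsupp.prod_fintype _ _ (by simp), Fin.prod_univ_two]
  simp only [Matrix.cons_val_zero, Matrix.cons_val_one, one_pow, mul_one]
  calc _ ≤ (Polynomial.X ^ m 0 : Polynomial R).natDegree := Polynomial.natDegree_C_mul_le _ _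
    _ ≤ n := (Polynomial.natDegree_X_pow_le _).trans (by omega)

variable {K : Type*} [Field K] {n : ℕ}

/-- A binary form is the homogenization of its dehomogenization `q(T, 1)`, so a zero `x` of `q`
with `x₁ ≠ 0` gives the root `x₀ / x₁` of `q(T, 1)`, and its linear factor homogenizes. -/
theorem X_sub_C_mul_X_dvd_of_eval_eq_zero {q : MvPolynomial (Fin 2) K} (hq : q.IsHomogeneous n)
    {x : Fin 2 → K} (hx₁ : x 1 ≠ 0) (hx : eval x q = 0) : X 0 - C (x 0 / x 1) * X 1 ∣ q := by
  have hpq := Polynomial.homogenize_eq_of_isHomogeneous hq rfl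
  have hdeg := hq.natDegree_aeval_X_one_le
  generalize MvPolynomial.aeval ![(Polynomial.X : Polynomial K), 1] q = p at hpq hdeg
  subst hpq
  rw [Polynomial.eval_homogenize hdeg x hx₁, mul_eq_zero, or_iff_left (pow_ne_zero _ hx₁)] at hx
  obtain ⟨r, rfl⟩ := Polynomial.dvd_iff_isRoot.mpr hx
  rcases eq_or_ne r 0 with rfl | hr₀
  · simp
  rw [(Polynomial.monic_X_sub_C _).natDegree_mul' hr₀, Polynomial.natDegree_X_sub_C] at hdeg
  obtain ⟨k, rfl⟩ : ∃ k, n = 1 + k := ⟨n - 1, by omega⟩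
  have hk : r.natDegree ≤ k := by omega
  rw [Polynomial.homogenize_mul (Polynomial.X - Polynomial.C (x 0 / x 1)) r
    (Polynomial.natDegree_X_sub_C _).le hk]
  refine (dvd_of_eq ?_).mul_right _
  rw [Polynomial.homogenize_sub, Polynomial.homogenize_X one_ne_zero, Polynomial.homogenize_C]
  simp

variable {a b : MvPolynomial (Fin 2) K}

theorem apply_one_eq_zero_of_isRelPrime_of_eval_eq_zero (ha : a.IsHomogeneous n)
    (hb : b.IsHomogeneous n) (hab : IsRelPrime a b) {x : Fin 2 → K} (hxa : eval x a = 0)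
    (hxb : eval x b = 0) : x 1 = 0 := by
  by_contra hx₁
  have hL := hab (ha.X_sub_C_mul_X_dvd_of_eval_eq_zero hx₁ hxa)
    (hb.X_sub_C_mul_X_dvd_of_eval_eq_zero hx₁ hxb)
  simpa using hL.map (constantCoeff : MvPolynomial (Fin 2) K →+* K)

theorem eq_zero_of_isRelPrime_of_eval_eq_zero (ha : a.IsHomogeneous n) (hb : b.IsHomogeneous n)
    (hab : IsRelPrime a b) {x : Fin 2 → K} (hxa : eval x a = 0) (hxb : eval x b = 0) :
    x = 0 := by
  let e := renameEquiv K (Equiv.swap (0 : Fin 2) 1)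
  have hab' : IsRelPrime (e a) (e b) := fun c hca hcb => by
    have hunit := hab (by simpa using map_dvd e.symm hca : e.symm c ∣ a)
      (by simpa using map_dvd e.symm hcb : e.symm c ∣ b)
    simpa using hunit.map e
  have hx₀ := apply_one_eq_zero_of_isRelPrime_of_eval_eq_zero
    (ha.rename_isHomogeneous (f := Equiv.swap 0 1)) hb.rename_isHomogeneous hab'
    (x := x ∘ Equiv.swap 0 1) (by simpa [e, eval_rename, Function.comp_def] using hxa)
    (by simpa [e, eval_rename, Function.comp_def] using hxb)
  have hx₁ := ha.apply_one_eq_zero_of_isRelPrime_of_eval_eq_zero hb hab hxa hxb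
  ext i
  fin_cases i
  · simpa using hx₀
  · simpa using hx₁

theorem exists_X_pow_mem_span_pair [IsAlgClosed K] (ha : a.IsHomogeneous n)
    (hb : b.IsHomogeneous n) (hab : IsRelPrime a b) (i : Fin 2) :
    ∃ k : ℕ, X i ^ k ∈ Ideal.span {a, b} := by
  rw [← Ideal.mem_radical_iff, ← vanishingIdeal_zeroLocus_eq_radical (K := K)]
  intro x hx
  have hx₀ := ha.eq_zero_of_isRelPrime_of_eval_eq_zero hb hab
    (hx a (Ideal.subset_span (by simp))) (hx b (Ideal.subset_span (by simp)))
  simp [hx₀]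

theorem isRelPrime_aeval [IsAlgClosed K] {S : Type*} [CommSemiring S] [Algebra K S]
    [DecompositionMonoid S] (ha : a.IsHomogeneous n) (hb : b.IsHomogeneous n)
    (hab : IsRelPrime a b) {F : Fin 2 → S} (hF : IsRelPrime (F 0) (F 1)) :
    IsRelPrime (MvPolynomial.aeval F a) (MvPolynomial.aeval F b) := by
  intro c hca hcb
  have hdvd_pow (i : Fin 2) : ∃ k : ℕ, c ∣ F i ^ k := by
    obtain ⟨k, hk⟩ := ha.exists_X_pow_mem_span_pair hb hab i
    obtain ⟨u, v, huv⟩ := Ideal.mem_span_pair.mp hk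
    have hFk := congrArg (MvPolynomial.aeval F) huv
    simp only [map_add, map_mul, map_pow, aeval_X] at hFk
    exact ⟨k, hFk ▸ dvd_add (hca.mul_left _) (hcb.mul_left _)⟩
  obtain ⟨k, hk⟩ := hdvd_pow 0
  obtain ⟨m, hm⟩ := hdvd_pow 1
  exact hF.pow hk hm

end IsHomogeneous

end MvPolynomial

theorem stmt_3_general (K : Type*) [Field K] [IsAlgClosed K] (d₀ : ℕ)
    (a b : MvPolynomial (Fin 2) K)
    (ha : a.IsHomogeneous d₀) (hb : b.IsHomogeneous d₀) (hab : IsRelPrime a b)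
    (F₁ F₂ : MvPolynomial (Fin 3) K)
    (hF₁ : F₁.IsHomogeneous 2) (hF₂ : F₂.IsHomogeneous 2)
    (hF : IsRelPrime F₁ F₂) :
    aeval ![F₁, F₂] b * X 0 - aeval ![F₁, F₂] a * X 1 ≠ 0 := by
  intro h
  obtain ⟨c, hA, hB⟩ := exists_eq_X_mul_of_mul_X_eq_mul_X (by decide) (sub_eq_zero.mp h)
  have hc : IsUnit c := ha.isRelPrime_aeval hb hab (F := ![F₁, F₂]) hF
    (hA ▸ dvd_mul_left c _) (hB ▸ dvd_mul_left c _)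
  obtain ⟨r, hr, rfl⟩ := isUnit_iff_eq_C_of_isReduced.mp hc
  have hA₁ : (aeval ![F₁, F₂] a).IsHomogeneous 1 :=
    hA ▸ (isHomogeneous_X K 0).mul (isHomogeneous_C _ r)
  have hA₂ : (aeval ![F₁, F₂] a).IsHomogeneous (2 * d₀) :=
    ha.aeval _ fun i => by fin_cases i <;> assumption
  have hA₀ : aeval ![F₁, F₂] a ≠ 0 :=
    hA ▸ mul_ne_zero (X_ne_zero 0) (C_ne_zero.mpr hr.ne_zero)
  have := hA₁.inj_right hA₂ hA₀
  omega

/-- If `a, b ∈ K[T₁,T₂]` are homogeneous of the same degree `d₀ > 1` with no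
common factor, and `F₁, F₂ ∈ K[X₁,X₂,X₃]` are homogeneous of degree `2` with
no common factor, then `b(F₁(X),F₂(X))X₁ − a(F₁(X),F₂(X))X₂` is not
identically zero. -/
theorem stmt_3 (K : Type*) [Field K] [IsAlgClosed K] (d₀ : ℕ) (hd₀ : 1 < d₀)
    (a b : MvPolynomial (Fin 2) K)
    (ha : a.IsHomogeneous d₀) (hb : b.IsHomogeneous d₀) (hab : IsRelPrime a b)
    (F₁ F₂ : MvPolynomial (Fin 3) K)
    (hF₁ : F₁.IsHomogeneous 2) (hF₂ : F₂.IsHomogeneous 2)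
    (hF : IsRelPrime F₁ F₂) :
    aeval ![F₁, F₂] b * X 0 - aeval ![F₁, F₂] a * X 1 ≠ 0 :=
  stmt_3_general K d₀ a b ha hb hab F₁ F₂ hF₁ hF₂ hF
end

section
/- Let K be a field and a(T), b(T) ∈ K[T₁,T₂] homogeneous of the same degree d₀ with gcd(a,b) = 1. Set F₁(X) = X₁X₂ − X₂X₃, F₂(X) = X₁X₃ − X₂X₃ and u₁ = −a·(a·T₁ + b·(T₂−T₁)), u₂ = −b·(a·T₁ + b·(T₂−T₁)), u₃ = −a·b·T₂ (where a,b,T₁,T₂ are evaluated at (T₁,T₂)). Then gcd(u₁,u₂,u₃) divides T₁·T₂·(T₁−T₂). -/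
open MvPolynomial

/-- For `F = (X₁X₂ − X₂X₃, X₁X₃ − X₂X₃)`: with `a, b` homogeneous of the same
degree `d₀` without common factor, and `u₁ = −a(aT₁ + b(T₂−T₁))`,
`u₂ = −b(aT₁ + b(T₂−T₁))`, `u₃ = −abT₂`, the gcd of `u₁,u₂,u₃` divides
`T₁T₂(T₁−T₂)`: every common divisor of `u₁,u₂,u₃` divides `T₁T₂(T₁−T₂)`. -/
theorem stmt_4 (K : Type*) [Field K] (d₀ : ℕ) (a b : MvPolynomial (Fin 2) K)
    (ha : a.IsHomogeneous d₀) (hb : b.IsHomogeneous d₀) (hab : IsRelPrime a b)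
    (u₁ u₂ u₃ : MvPolynomial (Fin 2) K)
    (hu₁ : u₁ = -(a * (a * X 0 + b * (X 1 - X 0))))
    (hu₂ : u₂ = -(b * (a * X 0 + b * (X 1 - X 0))))
    (hu₃ : u₃ = -(a * b * X 1)) :
    ∀ g : MvPolynomial (Fin 2) K, g ∣ u₁ → g ∣ u₂ → g ∣ u₃ →
      g ∣ X 0 * X 1 * (X 0 - X 1) := by
  intro g hg1 hg2 hg3
  set c : MvPolynomial (Fin 2) K := a * X 0 + b * (X 1 - X 0) with hc
  rw [hu₁, dvd_neg] at hg1
  rw [hu₂, dvd_neg] at hg2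
  rw [hu₃, dvd_neg] at hg3
  -- decompose g along a * b * X 1
  obtain ⟨e, d₃, he, hd₃, rfl⟩ := exists_dvd_and_dvd_of_dvd_mul hg3
  obtain ⟨d₁, d₂, hd₁, hd₂, rfl⟩ := exists_dvd_and_dvd_of_dvd_mul he
  -- d₁ ∣ a, d₂ ∣ b, d₃ ∣ X 1
  have hd₁g : d₁ ∣ d₁ * d₂ * d₃ := ⟨d₂ * d₃, by ring⟩
  have hd₂g : d₂ ∣ d₁ * d₂ * d₃ := ⟨d₁ * d₃, by ring⟩
  -- d₁ is rel prime to b, divides b * c, hence divides c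
  have h₁c : d₁ ∣ c := by
    have : IsRelPrime d₁ b := hab.of_dvd_left hd₁
    exact this.dvd_of_dvd_mul_left (hd₁g.trans hg2)
  -- d₂ is rel prime to a, divides a * c, hence divides c
  have h₂c : d₂ ∣ c := by
    have : IsRelPrime d₂ a := hab.symm.of_dvd_left hd₂
    exact this.dvd_of_dvd_mul_left (hd₂g.trans hg1)
  -- d₁ ∣ c and d₁ ∣ a ⟹ d₁ ∣ b * (X 1 - X 0) ⟹ d₁ ∣ X 1 - X 0
  have h₁ : d₁ ∣ X 1 - X 0 := by
    have hbx : d₁ ∣ b * (X 1 - X 0) := by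
      have : b * (X 1 - X 0) = c - a * X 0 := by rw [hc]; ring
      rw [this]
      exact dvd_sub h₁c (Dvd.dvd.mul_right hd₁ _)
    exact (hab.of_dvd_left hd₁).dvd_of_dvd_mul_left hbx
  -- d₂ ∣ c and d₂ ∣ b ⟹ d₂ ∣ a * X 0 ⟹ d₂ ∣ X 0
  have h₂ : d₂ ∣ X (0 : Fin 2) := by
    have hax : d₂ ∣ a * X 0 := by
      have : a * X (0 : Fin 2) = c - b * (X 1 - X 0) := by rw [hc]; ring
      rw [this]
      exact dvd_sub h₂c (Dvd.dvd.mul_right hd₂ _)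
    exact (hab.symm.of_dvd_left hd₂).dvd_of_dvd_mul_left hax
  -- combine: d₁ d₂ d₃ ∣ (X1 - X0) * X0 * X1 = - X0 X1 (X0 - X1)
  have : d₁ * d₂ * d₃ ∣ (X 1 - X 0) * X 0 * X 1 :=
    mul_dvd_mul (mul_dvd_mul h₁ h₂) hd₃
  have heq : (X 1 - X 0) * X 0 * X 1 = -(X 0 * X 1 * (X 0 - X 1) : MvPolynomial (Fin 2) K) := by
    ring
  rw [heq, dvd_neg] at this
  exact this
end

section
/- Let K be a field and a(T), b(T) ∈ K[T₁,T₂] homogeneous with gcd(a,b)=1. Then gcd(a·T₁, b²·T₁ − a²·T₂) divides T₁ in K[T₁,T₂]. -/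
/-!
Let `p` be a prime and `g` a common divisor of `a p` and `b² p − a² y` with `a, b` coprime.
Split `g = g₁ g₂` with `g₁ ∣ a` and `g₂ ∣ p`. Modulo `g₁` the second element is `b² p`, and `g₁`
is coprime to `b`, so `g₁ ∣ p` as well. Thus `g ∣ p` unless both factors are associate to `p`;
but then `p ∣ a` and `p² ∣ b² p − a² y`, which forces `p ∣ b`.
The theorem is the case `p = T₁`, `y = T₂` of this, `T₁` being prime in `K[T₁,T₂]`.
-/

open MvPolynomial

section

variable {R : Type*} [CommRing R] {a b d g p y : R}

theorem IsRelPrime.dvd_of_dvd_of_dvd_sq_mul_sub [DecompositionMonoid R] (hab : IsRelPrime a b)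
    (hda : d ∣ a) (hd : d ∣ b ^ 2 * p - a ^ 2 * y) : d ∣ p := by
  have hdb : d ∣ b ^ 2 * p := by
    simpa using dvd_add hd ((hda.trans (dvd_pow_self a two_ne_zero)).mul_right y)
  exact (hab.of_dvd_left hda).pow_right.dvd_of_dvd_mul_left hdb

theorem Prime.not_sq_dvd_sq_mul_sub [IsDomain R] (hp : Prime p) (hab : IsRelPrime a b)
    (hpa : p ∣ a) : ¬p ^ 2 ∣ b ^ 2 * p - a ^ 2 * y := by
  intro h
  have hpb : p * p ∣ b ^ 2 * p := by
    simpa [sq] using dvd_add h ((pow_dvd_pow_of_dvd hpa 2).mul_right y)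
  exact hp.not_isUnit (hab hpa (hp.dvd_of_dvd_pow ((mul_dvd_mul_iff_right hp.ne_zero).1 hpb)))

theorem Prime.dvd_of_dvd_mul_of_dvd_sq_mul_sub [IsDomain R] [DecompositionMonoid R]
    (hp : Prime p) (hab : IsRelPrime a b) (hga : g ∣ a * p) (hg : g ∣ b ^ 2 * p - a ^ 2 * y) :
    g ∣ p := by
  obtain ⟨g₁, g₂, hg₁a, hg₂p, rfl⟩ := exists_dvd_and_dvd_of_dvd_mul hga
  have hg₁p : g₁ ∣ p := hab.dvd_of_dvd_of_dvd_sq_mul_sub hg₁a ((dvd_mul_right _ _).trans hg)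
  rcases hp.irreducible.dvd_iff.1 hg₁p with hu₁ | hpg₁
  · exact hu₁.mul_left_dvd.2 hg₂p
  rcases hp.irreducible.dvd_iff.1 hg₂p with hu₂ | hpg₂
  · exact hu₂.mul_right_dvd.2 hg₁p
  have hp2 : p ^ 2 ∣ g₁ * g₂ := sq p ▸ mul_dvd_mul hpg₁.dvd hpg₂.dvd
  exact absurd (hp2.trans hg) (hp.not_sq_dvd_sq_mul_sub hab (hpg₁.dvd.trans hg₁a))

end

theorem stmt_7_general (K : Type*) [Field K] (a b : MvPolynomial (Fin 2) K) (hab : IsRelPrime a b) :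
    ∀ g : MvPolynomial (Fin 2) K, g ∣ a * X 0 →
      g ∣ b ^ 2 * X 0 - a ^ 2 * X 1 → g ∣ X 0 :=
  fun _ => X_prime.dvd_of_dvd_mul_of_dvd_sq_mul_sub hab

/-- If `a, b ∈ K[T₁,T₂]` are homogeneous with no common factor, then
`gcd(aT₁, b²T₁ − a²T₂)` divides `T₁`: every common divisor of `aT₁` and
`b²T₁ − a²T₂` divides `T₁`. -/
theorem stmt_7 (K : Type*) [Field K] (da db : ℕ) (a b : MvPolynomial (Fin 2) K)
    (ha : a.IsHomogeneous da) (hb : b.IsHomogeneous db) (hab : IsRelPrime a b) :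
    ∀ g : MvPolynomial (Fin 2) K, g ∣ a * X 0 →
      g ∣ b ^ 2 * X 0 - a ^ 2 * X 1 → g ∣ X 0 :=
  stmt_7_general K a b hab
end

section
/- Let K be a field, u₁,u₂,u₃ ∈ K[T₁,T₂] homogeneous of degree d, and let F₁,F₂ ∈ K[X₁,X₂,X₃] be homogeneous of degree 2 with no common factor such that T₁F₂(u(T)) − T₂F₁(u(T)) = 0, where u = (u₁,u₂,u₃). Suppose the polynomial E(X) = irreducible implicit equation of the curve has degree d, and let P(T,X) be a bihomogeneous polynomial of bidegree (i,j) vanishing under the substitution X ↦ u(T), with 2i + j < d. Then P(T,X) is a polynomial multiple of T₁F₂(X) − T₂F₁(X). -/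
/-!
Substituting the inverse `(F₁, F₂)` of the parameterization for `T` turns `P` into the form
`R = P(F₁(X), F₂(X), X)` of degree `2i + j < d`. Since `P` is homogeneous of degree `i` in `T` and
`(F₁(u), F₂(u))` is proportional to `(T₁, T₂)`, `R` vanishes on the curve. A nonzero form of degree
`< d` vanishing on the curve is coprime to `E`; eliminating one variable between the two gives an
algebraic relation between each pair of the `uₖ`, which over an algebraically closed field makes
the `uₖ` proportional, against their coprimality. Hence `R = 0`. Modulo `G` we have
`T₁F₂ ≡ T₂F₁`, so `F₂ⁱ P ≡ T₂ⁱ R = 0`; since `G` is prime and does not divide `F₂`, it divides `P`.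
-/

open MvPolynomial

theorem Polynomial.exists_mul_add_mul_eq_C_of_irreducible_of_not_dvd {D : Type*} [CommRing D]
    [IsDomain D] [IsGCDMonoid D] {E R : Polynomial D} (hE : Irreducible E) (hER : ¬ E ∣ R) :
    ∃ p q : Polynomial D, ∃ s : D, s ≠ 0 ∧ E * p + R * q = Polynomial.C s := by
  by_cases hdeg : E.natDegree = 0
  · refine ⟨1, 0, E.coeff 0, fun h => hE.ne_zero ?_, ?_⟩
    · rw [Polynomial.eq_C_of_natDegree_eq_zero hdeg, h, map_zero]
    · rw [mul_one, mul_zero, add_zero, ← Polynomial.eq_C_of_natDegree_eq_zero hdeg]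
  let F := FractionRing D
  have hinj : Function.Injective (algebraMap D F) := IsFractionRing.injective D F
  have hprim : E.IsPrimitive := hE.isPrimitive hdeg
  have hcop : IsCoprime (E.map (algebraMap D F)) (R.map (algebraMap D F)) :=
    ((hprim.irreducible_iff_irreducible_map_fraction_map (K := F)).mp hE).coprime_iff_not_dvd.mpr
      (mt (hprim.dvd_iff_fraction_map_dvd_fraction_map F).mpr hER)
  obtain ⟨p, q, -, -, hpq⟩ :=
    Polynomial.exists_mul_add_mul_eq_C_resultant E R le_rfl le_rfl (Or.inl hdeg)
  refine ⟨p, q, _, fun h => Polynomial.resultant_ne_zero _ _ hcop ?_, hpq⟩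
  rw [Polynomial.natDegree_map_eq_of_injective hinj, Polynomial.natDegree_map_eq_of_injective hinj,
    Polynomial.resultant_map_map, h, map_zero]

theorem IsAlgClosed.mem_range_algebraMap_of_aeval_eq_zero {K L : Type*} [Field K] [IsAlgClosed K]
    [Field L] [Algebra K L] {q : Polynomial K} (hq : q ≠ 0) {z : L}
    (hz : Polynomial.aeval z q = 0) : z ∈ (algebraMap K L).range :=
  minpoly.degree_eq_one_iff.mp <| IsAlgClosed.degree_eq_one_of_irreducible K <|
    minpoly.irreducible (IsAlgebraic.isIntegral ⟨q, hq, hz⟩)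

namespace MvPolynomial

section Substitution

variable {R A σ M : Type*} [CommSemiring R] [AddCommMonoid M] {w : σ → M} {n : M}
  {P : MvPolynomial σ R}

theorem IsWeightedHomogeneous.aeval_pow_mul [CommSemiring A] [Algebra R A]
    (hP : P.IsWeightedHomogeneous w n) (φ : M →+ ℕ) (r : A) (f : σ → A) :
    aeval (fun k => r ^ φ (w k) * f k) P = r ^ φ n * aeval f P := by
  rw [aeval_def, aeval_def, eval₂_eq, eval₂_eq, Finset.mul_sum]
  refine Finset.sum_congr rfl fun m hm => ?_
  have hdeg : ∑ k ∈ m.support, m k * φ (w k) = φ n := by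
    rw [← hP (mem_support_iff.mp hm), Finsupp.weight_apply, Finsupp.sum, map_sum]
    simp only [map_nsmul, smul_eq_mul]
  simp only [mul_pow, ← pow_mul, Finset.prod_mul_distrib, Finset.prod_pow_eq_pow_sum,
    mul_comm (φ (w _)), hdeg]
  ring

theorem IsWeightedHomogeneous.isHomogeneous_aeval {τ : Type*}
    (hP : P.IsWeightedHomogeneous w n) (φ : M →+ ℕ) {f : σ → MvPolynomial τ R}
    (hf : ∀ k, (f k).IsHomogeneous (φ (w k))) : (aeval f P).IsHomogeneous (φ n) := by
  rw [aeval_def, eval₂_eq]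
  refine IsHomogeneous.sum _ _ _ fun m hm => ?_
  have hdeg : ∑ k ∈ m.support, φ (w k) * m k = φ n := by
    rw [← hP (mem_support_iff.mp hm), Finsupp.weight_apply, Finsupp.sum, map_sum]
    simp only [map_nsmul, smul_eq_mul, mul_comm]
  rw [← zero_add (φ n), ← hdeg]
  exact (isHomogeneous_C _ _).mul (IsHomogeneous.prod _ _ _ fun k _ => (hf k).pow (m k))

theorem dvd_aeval_sub_aeval [CommRing A] [Algebra R A] {c : A} {f g : σ → A}
    (h : ∀ k, c ∣ f k - g k) (P : MvPolynomial σ R) : c ∣ aeval f P - aeval g P := by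
  rw [← Ideal.mem_span_singleton, ← Ideal.Quotient.eq, ← Ideal.Quotient.mkₐ_eq_mk R,
    comp_aeval_apply, comp_aeval_apply]
  congr 2
  funext k
  exact Ideal.Quotient.eq.mpr (Ideal.mem_span_singleton.mpr (h k))

end Substitution

theorem dvd_pow_mul_aeval_sub_pow_mul_aeval {R A τ : Type*} [CommSemiring R] [CommRing A]
    [Algebra R A] {P : MvPolynomial (Fin 2 ⊕ τ) R} {i j : ℕ}
    (hP : P.IsWeightedHomogeneous (Sum.elim (fun _ => ((1 : ℕ), (0 : ℕ))) (fun _ => (0, 1))) (i, j))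
    {f g : Fin 2 ⊕ τ → A} (hfg : ∀ k, f (Sum.inr k) = g (Sum.inr k)) :
    f (Sum.inl 0) * g (Sum.inl 1) - f (Sum.inl 1) * g (Sum.inl 0) ∣
      g (Sum.inl 1) ^ i * aeval f P - f (Sum.inl 1) ^ i * aeval g P := by
  have hscale := hP.aeval_pow_mul (A := A) (AddMonoidHom.fst ℕ ℕ)
  simp only [AddMonoidHom.coe_fst] at hscale
  rw [← hscale, ← hscale]
  refine dvd_aeval_sub_aeval (fun k => ?_) P
  rcases k with k | k
  · fin_cases k
    · exact ⟨1, by simp; ring⟩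
    · exact ⟨0, by simp; ring⟩
  · simp [hfg]

theorem not_X_mul_rename_sub_dvd_rename {R σ : Type*} [CommRing R] {F₁ F₂ : MvPolynomial σ R}
    (hF₁ : ¬ IsUnit F₁) (hF : IsRelPrime F₁ F₂) :
    ¬ (X (Sum.inl 0) * rename Sum.inr F₂ - X (Sum.inl 1) * rename Sum.inr F₁ :
      MvPolynomial (Fin 2 ⊕ σ) R) ∣ rename Sum.inr F₂ := fun h => by
  -- at `(T₁, T₂) = (0, 1)` the divisor becomes `-F₁`
  have h' := map_dvd (aeval (Sum.elim ![0, 1] X) :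
    MvPolynomial (Fin 2 ⊕ σ) R →ₐ[R] MvPolynomial σ R) h
  simp only [map_sub, map_mul, aeval_X, aeval_rename, Sum.elim_inl, Sum.elim_comp_inr,
    aeval_X_left_apply, Matrix.cons_val_zero, Matrix.cons_val_one, zero_mul, one_mul, zero_sub,
    neg_dvd] at h'
  exact hF₁ (hF dvd_rfl h')

theorem IsHomogeneous.not_isUnit {σ R : Type*} [CommRing R] [IsDomain R] {p : MvPolynomial σ R}
    {n : ℕ} (hp : p.IsHomogeneous n) (hn : n ≠ 0) : ¬ IsUnit p := fun hunit => by
  have := totalDegree_le_of_dvd_of_isDomain hunit.dvd one_ne_zero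
  rw [hp.totalDegree hunit.ne_zero, totalDegree_one] at this
  omega

theorem exists_homogeneousComponent_ne_zero_aeval_eq_zero {R σ τ : Type*} [CommSemiring R]
    {d : ℕ} (hd : d ≠ 0) {f : σ → MvPolynomial τ R} (hf : ∀ k, (f k).IsHomogeneous d)
    {s : MvPolynomial σ R} (hs : s ≠ 0) (hfs : aeval f s = 0) :
    ∃ k, homogeneousComponent k s ≠ 0 ∧ aeval f (homogeneousComponent k s) = 0 := by
  obtain ⟨k, hk⟩ : ∃ k, homogeneousComponent k s ≠ 0 := by
    by_contra! hall
    exact hs (by rw [← sum_homogeneousComponent s]; simp [hall])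
  refine ⟨k, hk, ?_⟩
  have hdeg (k' : ℕ) : (aeval f (homogeneousComponent k' s)).IsHomogeneous (d * k') :=
    (homogeneousComponent_isHomogeneous k' s).aeval _ hf
  -- `aeval f` multiplies degrees by `d`, so the `(d * k)`-th component of `aeval f s = 0`
  -- is the image of the `k`-th component of `s`
  have key := congrArg (fun p => homogeneousComponent (d * k) (aeval f p))
    (sum_homogeneousComponent s)
  simp only [hfs, map_zero, map_sum, homogeneousComponent_of_mem (hdeg _),
    mul_right_inj' hd, eq_comm (a := k), Finset.sum_ite_eq'] at key
  refine (if_pos ?_).symm.trans key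
  rw [Finset.mem_range, Nat.lt_succ_iff]
  by_contra! hlt
  exact hk (homogeneousComponent_eq_zero _ _ hlt)

theorem exists_ne_zero_aeval_comp_succ_eq_zero {K A : Type*} [Field K] [CommRing A]
    [Algebra K A] {n : ℕ} {E R : MvPolynomial (Fin (n + 1)) K} (hE : Irreducible E)
    (hER : ¬ E ∣ R) {u : Fin (n + 1) → A} (hEu : aeval u E = 0) (hRu : aeval u R = 0) :
    ∃ s : MvPolynomial (Fin n) K, s ≠ 0 ∧ aeval (u ∘ Fin.succ) s = 0 := by
  let ε := finSuccEquiv K n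
  obtain ⟨p, q, s, hs, hpq⟩ := Polynomial.exists_mul_add_mul_eq_C_of_irreducible_of_not_dvd
    ((MulEquiv.irreducible_iff ε).mpr hE) (mt (map_dvd_iff ε).mp hER)
  refine ⟨s, hs, ?_⟩
  have hC : ε (rename Fin.succ s) = Polynomial.C s := by
    rw [finSuccEquiv_apply, coe_eval₂Hom, eval₂_rename]
    conv_rhs => rw [← eval₂_eta s, eval₂_comp_left]
    rfl
  have h := congrArg (fun x => aeval u (ε.symm x)) hpq
  simpa [← hC, aeval_rename, hEu, hRu] using h.symm

theorem not_linearIndependent_of_aeval_eq_zero {K A : Type*} [Field K] [IsAlgClosed K]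
    [CommRing A] [IsDomain A] [Algebra K A] {S : MvPolynomial (Fin 2) K} {e : ℕ}
    (hS : S.IsHomogeneous e) (hS0 : S ≠ 0) {v w : A} (hvw : aeval ![v, w] S = 0) :
    ¬ LinearIndependent K ![v, w] := by
  rcases eq_or_ne w 0 with rfl | hw
  · exact fun h => h.ne_zero 1 rfl
  let L := FractionRing A
  let ι := IsScalarTower.toAlgHom K A L
  have hι : Function.Injective ι := IsFractionRing.injective A L
  have hwL : ι w ≠ 0 := (map_ne_zero_iff ι hι).mpr hw
  set z := ι v / ι w
  -- dehomogenize: `S(v, w) = w ^ e * S(v / w, 1)`, and `S(X, 1) ≠ 0` homogenizes back to `S`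
  set q : Polynomial K := aeval ![Polynomial.X, 1] S with hq
  have hq0 : q ≠ 0 := fun h => hS0 <| by
    rw [← Polynomial.homogenize_eq_of_isHomogeneous hS hq.symm, h, Polynomial.homogenize_zero]
  have hzq : Polynomial.aeval z q = 0 := by
    have h := hS.aeval_pow_mul (AddMonoidHom.id ℕ) (ι w) ![z, 1]
    have hvw' : (fun k => ι w ^ (AddMonoidHom.id ℕ) ((1 : Fin 2 → ℕ) k) * ![z, 1] k)
        = fun k => ι (![v, w] k) := by
      funext k
      fin_cases k <;> simp [z, mul_div_cancel₀ _ hwL]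
    rw [hvw', ← comp_aeval_apply, hvw, map_zero, eq_comm] at h
    have hz1 : (fun k => Polynomial.aeval z (![Polynomial.X, (1 : Polynomial K)] k)) = ![z, 1] := by
      funext k
      fin_cases k <;> simp
    rw [hq, comp_aeval_apply, hz1]
    exact (mul_eq_zero.mp h).resolve_left (pow_ne_zero _ hwL)
  obtain ⟨r, hr⟩ := IsAlgClosed.mem_range_algebraMap_of_aeval_eq_zero hq0 hzq
  have hv : v = r • w := hι <| by
    rw [Algebra.smul_def, map_mul, AlgHom.commutes, hr, div_mul_cancel₀ _ hwL]
  rw [LinearIndependent.pair_iff]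
  intro h
  simpa using h 1 (-r) (by rw [hv]; simp)

section PlaneCurve

variable {K τ : Type*} [Field K] {d : ℕ}

theorem not_linearIndependent_of_aeval_eq_zero_of_not_dvd [IsAlgClosed K] (hd : d ≠ 0)
    {u : Fin 3 → MvPolynomial τ K} (hu : ∀ k, (u k).IsHomogeneous d)
    {E R : MvPolynomial (Fin 3) K} (hE : Irreducible E) (hER : ¬ E ∣ R)
    (hEu : aeval u E = 0) (hRu : aeval u R = 0) (a b : Fin 3) :
    ¬ LinearIndependent K ![u a, u b] := by
  rcases eq_or_ne a b with rfl | hab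
  · exact fun h => zero_ne_one (h.injective rfl)
  have hperm : ∀ a b : Fin 3, a ≠ b → ∃ σ : Equiv.Perm (Fin 3), σ a = 1 ∧ σ b = 2 := by decide
  obtain ⟨σ, hσa, hσb⟩ := hperm a b hab
  -- move `a` and `b` to positions `1` and `2`, then eliminate the variable in position `0`
  let ρ := renameEquiv K σ
  have hρ {F : MvPolynomial (Fin 3) K} : aeval (u ∘ σ.symm) (ρ F) = aeval u F := by
    rw [renameEquiv_apply, aeval_rename, Function.comp_assoc, Equiv.symm_comp_self,
      Function.comp_id]
  obtain ⟨s, hs, hsu⟩ := exists_ne_zero_aeval_comp_succ_eq_zero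
    ((MulEquiv.irreducible_iff ρ).mpr hE) (mt (map_dvd_iff ρ).mp hER)
    (hρ.trans hEu) (hρ.trans hRu)
  have hpair : (u ∘ σ.symm) ∘ Fin.succ = ![u a, u b] := by
    funext k
    fin_cases k <;> simp [← hσa, ← hσb]
  rw [hpair] at hsu
  obtain ⟨k, hk, hku⟩ := exists_homogeneousComponent_ne_zero_aeval_eq_zero hd
    (fun k => by fin_cases k <;> simp [hu]) hs hsu
  exact not_linearIndependent_of_aeval_eq_zero (homogeneousComponent_isHomogeneous k s) hk hku

theorem exists_not_isUnit_forall_dvd_of_not_linearIndependent {ι : Type*} (hd : d ≠ 0)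
    {u : ι → MvPolynomial τ K} (hu : ∀ k, (u k).IsHomogeneous d)
    (hdep : ∀ a b, ¬ LinearIndependent K ![u a, u b]) :
    ∃ g, ¬ IsUnit g ∧ ∀ k, g ∣ u k := by
  by_cases h0 : ∀ k, u k = 0
  · exact ⟨0, not_isUnit_zero, fun k => by simp [h0 k]⟩
  obtain ⟨a, ha⟩ := not_forall.mp h0
  refine ⟨u a, (hu a).not_isUnit hd, fun b => ?_⟩
  obtain ⟨c, hc⟩ := not_forall_not.mp ((LinearIndependent.pair_iff' ha).not.mp (hdep a b))
  exact ⟨C c, by rw [← hc, smul_eq_C_mul, mul_comm]⟩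

theorem eq_zero_of_isHomogeneous_of_aeval_eq_zero [IsAlgClosed K] {e : ℕ}
    {u : Fin 3 → MvPolynomial τ K} (hu : ∀ k, (u k).IsHomogeneous d)
    (hucop : ∀ g, (∀ k, g ∣ u k) → IsUnit g) {E : MvPolynomial (Fin 3) K} (hE : Irreducible E)
    (hEd : E.IsHomogeneous d) (hEu : aeval u E = 0) {R : MvPolynomial (Fin 3) K}
    (hR : R.IsHomogeneous e) (he : e < d) (hRu : aeval u R = 0) : R = 0 := by
  by_contra hR0
  have hER : ¬ E ∣ R := fun h => by
    have := totalDegree_le_of_dvd_of_isDomain h hR0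
    rw [hEd.totalDegree hE.ne_zero, hR.totalDegree hR0] at this
    omega
  obtain ⟨g, hg, hgu⟩ := exists_not_isUnit_forall_dvd_of_not_linearIndependent (by omega) hu
    (not_linearIndependent_of_aeval_eq_zero_of_not_dvd (by omega) hu hE hER hEu hRu)
  exact hg (hucop g hgu)

end PlaneCurve

end MvPolynomial

/-- Let `u₁,u₂,u₃ ∈ K[T₁,T₂]` be homogeneous of degree `d` without common
factor, properly parameterizing the irreducible curve `E = 0` of degree `d`,
with inverse given by coprime quadratic forms `F₁, F₂` (so
`T₁F₂(u(T)) − T₂F₁(u(T)) = 0` and `T₁F₂(X) − T₂F₁(X)` is irreducible).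
If `P` is bihomogeneous of bidegree `(i,j)` with `P(T, u(T)) = 0` and
`2i + j < d`, then `P` is a polynomial multiple of `T₁F₂(X) − T₂F₁(X)`. -/
theorem stmt_13 (K : Type*) [Field K] [IsAlgClosed K] (d i j : ℕ)
    (u₁ u₂ u₃ : MvPolynomial (Fin 2) K)
    (hu₁ : u₁.IsHomogeneous d) (hu₂ : u₂.IsHomogeneous d)
    (hu₃ : u₃.IsHomogeneous d)
    (hucop : ∀ g : MvPolynomial (Fin 2) K, g ∣ u₁ → g ∣ u₂ → g ∣ u₃ → IsUnit g)
    (F₁ F₂ : MvPolynomial (Fin 3) K)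
    (hF₁ : F₁.IsHomogeneous 2) (hF₂ : F₂.IsHomogeneous 2)
    (hFcop : IsRelPrime F₁ F₂)
    (hrel : X 0 * aeval ![u₁, u₂, u₃] F₂ - X 1 * aeval ![u₁, u₂, u₃] F₁ = 0)
    (E : MvPolynomial (Fin 3) K) (hE : Irreducible E) (hEdeg : E.IsHomogeneous d)
    (hEcurve : aeval ![u₁, u₂, u₃] E = 0)
    -- the moving conic T₁F₂(X) − T₂F₁(X) in K[T₁,T₂,X₁,X₂,X₃]
    (G : MvPolynomial (Fin 2 ⊕ Fin 3) K)
    (hG : G = X (Sum.inl 0) * rename Sum.inr F₂ - X (Sum.inl 1) * rename Sum.inr F₁)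
    (hGirr : Irreducible G)
    (P : MvPolynomial (Fin 2 ⊕ Fin 3) K)
    (hP : P.IsWeightedHomogeneous
      (Sum.elim (fun _ => ((1 : ℕ), (0 : ℕ))) (fun _ => ((0 : ℕ), (1 : ℕ))))
      (i, j))
    (hPker : aeval (Sum.elim (fun k => X k) ![u₁, u₂, u₃]) P = 0)
    (hdeg : 2 * i + j < d) :
    G ∣ P := by
  set u : Fin 3 → MvPolynomial (Fin 2) K := ![u₁, u₂, u₃]
  set R : MvPolynomial (Fin 3) K := aeval (Sum.elim ![F₁, F₂] X) P with hRdef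
  have hR : R.IsHomogeneous (2 * i + j) :=
    hP.isHomogeneous_aeval (2 • AddMonoidHom.fst ℕ ℕ + AddMonoidHom.snd ℕ ℕ) (by
      rintro (t | t)
      · fin_cases t <;> simpa
      · simpa using isHomogeneous_X K t)
  have hRu : aeval u R = 0 := by
    have h := dvd_pow_mul_aeval_sub_pow_mul_aeval hP (f := Sum.elim (fun k => X k) u)
      (g := fun k => aeval u (Sum.elim ![F₁, F₂] X k)) (fun k => (aeval_X u k).symm)
    simp only [Sum.elim_inl, Matrix.cons_val_one, Matrix.cons_val_zero, hrel, hPker,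
      ← comp_aeval_apply, ← hRdef, mul_zero, zero_sub, dvd_neg, zero_dvd_iff] at h
    exact (mul_eq_zero.mp h).resolve_left (pow_ne_zero _ (X_ne_zero _))
  have hR0 : R = 0 := eq_zero_of_isHomogeneous_of_aeval_eq_zero
    (fun k => by fin_cases k <;> assumption) (fun g hg => hucop g (hg 0) (hg 1) (hg 2))
    hE hEdeg hEcurve hR hdeg hRu
  have hGP : G ∣ rename Sum.inr F₂ ^ i * P := by
    have h := dvd_pow_mul_aeval_sub_pow_mul_aeval hP (f := X)
      (g := fun k => rename Sum.inr (Sum.elim ![F₁, F₂] X k)) (fun k => (rename_X _ k).symm)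
    simpa only [Sum.elim_inl, Matrix.cons_val_one, Matrix.cons_val_zero, ← hG,
      aeval_X_left_apply, ← comp_aeval_apply, ← hRdef, hR0, map_zero, mul_zero, sub_zero] using h
  have hGF₂ := hG ▸ not_X_mul_rename_sub_dvd_rename (hF₁.not_isUnit two_ne_zero) hFcop
  exact (hGirr.prime.dvd_or_dvd hGP).resolve_left fun h => hGF₂ (hGirr.prime.dvd_of_dvd_pow h)
end

section
/- Let φ be a proper parameterization of a plane curve of degree d with μ-basis degrees μ and d−μ, and suppose the inverse of φ is defined by a pair of coprime homogeneous forms of degree ν. If μ > 1, then μ·ν + 1 ≥ d. In particular, if ν = 2 and μ > 1, then μ = ⌊d/2⌋. -/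
/-!
A syzygy `p` of degree `μ` gives the moving line `L(T; X) = ∑ pₖ(T) Xₖ`; substituting the
inverse `T = (F₁(X), F₂(X))` gives a form `R(X)` of degree `μν + 1`. Since `F(u)` is proportional
to `T` (`T₁F₂(u) = T₂F₁(u)`), homogeneity of `p` gives `T₁^μ R(u) = F₁(u)^μ ∑ pₖ uₖ = 0`,
so `E ∣ R`.
The same computation modulo `G = T₁F₂(X) - T₂F₁(X)` shows that `R = 0` would make the prime `G`
divide `F₁^μ L`; but `G` involves `T` and has degree `ν ≥ 2` in `X`, while `F₁` is free of `T` and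
`L` is linear in `X`. Hence `R ≠ 0` and `d ≤ μν + 1`. The cases `ν ≤ 1` are excluded directly:
for `ν = 0` the relation `T₁F₂(u) = T₂F₁(u)` forces `F = 0`, and for `ν = 1` it is itself a
syzygy of degree `1 < μ`.
-/

open MvPolynomial

namespace MvPolynomial

section CommSemiring

variable {R S σ : Type*} [CommSemiring R] [CommSemiring S] [Algebra R S]

theorem IsHomogeneous.aeval_smul {p : MvPolynomial σ R} {n : ℕ} (hp : p.IsHomogeneous n)
    (c : S) (v : σ → S) : MvPolynomial.aeval (c • v) p = c ^ n * MvPolynomial.aeval v p := by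
  conv_lhs => rw [p.as_sum]
  conv_rhs => rw [p.as_sum]
  rw [map_sum, map_sum, Finset.mul_sum]
  refine Finset.sum_congr rfl fun m hm ↦ ?_
  have hdeg : ∑ i ∈ m.support, m i = n := by
    rw [← hp (mem_support_iff.mp hm), Finsupp.weight_apply]
    simp [Finsupp.sum]
  simp only [aeval_monomial, Finsupp.prod, Pi.smul_apply, smul_eq_mul, mul_pow,
    Finset.prod_mul_distrib, Finset.prod_pow_eq_pow_sum, hdeg]
  ring

theorem IsHomogeneous.pow_mul_aeval_eq_of_mul_eq {p : MvPolynomial (Fin 2) R} {n : ℕ}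
    (hp : p.IsHomogeneous n) {x y a b : S} (h : x * b = y * a) :
    x ^ n * MvPolynomial.aeval ![a, b] p = a ^ n * MvPolynomial.aeval ![x, y] p := by
  rw [← hp.aeval_smul, ← hp.aeval_smul]
  congr 1
  ext i
  fin_cases i <;> simp [h, mul_comm]

theorem eq_zero_of_X_mul_C_eq_X_mul_C {α β : R}
    (h : X 0 * C β = (X 1 * C α : MvPolynomial (Fin 2) R)) : α = 0 ∧ β = 0 := by
  constructor
  · simpa [mul_comm _ (C _), coeff_C_mul, coeff_X, Finsupp.single_eq_single_iff] using
      (congrArg (coeff (Finsupp.single 1 1)) h).symm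
  · simpa [mul_comm _ (C _), coeff_C_mul, coeff_X, Finsupp.single_eq_single_iff] using
      congrArg (coeff (Finsupp.single 0 1)) h

end CommSemiring

theorem IsHomogeneous.le_of_dvd {R σ : Type*} [CommRing R] [IsDomain R]
    {a b : MvPolynomial σ R} {m n : ℕ} (ha : a.IsHomogeneous m) (hb : b.IsHomogeneous n) (hab : a ∣ b) (hb0 : b ≠ 0) :
    m ≤ n := by
  have ha0 : a ≠ 0 := by rintro rfl; exact hb0 (zero_dvd_iff.mp hab)
  rw [← ha.totalDegree ha0, ← hb.totalDegree hb0]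
  exact totalDegree_le_of_dvd_of_isDomain hab hb0

end MvPolynomial

namespace Parametrization

section CommSemiring

variable {R S ι : Type*} [CommSemiring R] [CommSemiring S] [Algebra R S] [Fintype ι]

noncomputable def substSyzygy (p : ι → MvPolynomial (Fin 2) R) (F : Fin 2 → MvPolynomial ι R) :
    MvPolynomial ι R :=
  ∑ k, aeval F (p k) * X k

noncomputable def movingLine (p : ι → MvPolynomial (Fin 2) R) : MvPolynomial (Fin 2 ⊕ ι) R :=
  ∑ k, rename Sum.inl (p k) * X (Sum.inr k)

theorem isHomogeneous_substSyzygy {p : ι → MvPolynomial (Fin 2) R} {μ ν : ℕ}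
    (hp : ∀ k, (p k).IsHomogeneous μ) {F : Fin 2 → MvPolynomial ι R}
    (hF : ∀ i, (F i).IsHomogeneous ν) : (substSyzygy p F).IsHomogeneous (ν * μ + 1) :=
  IsHomogeneous.sum _ _ _ fun k _ ↦ ((hp k).aeval F hF).mul (isHomogeneous_X _ _)

theorem pow_mul_aeval_substSyzygy {p : ι → MvPolynomial (Fin 2) R} {μ : ℕ}
    (hp : ∀ k, (p k).IsHomogeneous μ) {F : Fin 2 → MvPolynomial ι R} {x y : S} {u : ι → S}
    (h : x * aeval u (F 1) = y * aeval u (F 0)) :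
    x ^ μ * aeval u (substSyzygy p F) = aeval u (F 0) ^ μ * ∑ k, aeval ![x, y] (p k) * u k := by
  have hF : (fun i ↦ aeval u (F i)) = ![aeval u (F 0), aeval u (F 1)] := by
    ext i; fin_cases i <;> rfl
  simp only [substSyzygy, map_sum, map_mul, aeval_X, Finset.mul_sum, ← mul_assoc,
    comp_aeval_apply, hF, (hp _).pow_mul_aeval_eq_of_mul_eq h]

end CommSemiring

section CommRing

variable {R ι : Type*} [CommRing R]

/-- `T₁F₂(X) - T₂F₁(X)`, cutting out the graph of the inverse `X ↦ (F₁(X) : F₂(X))`; the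
variables `Sum.inl` are the parameters `T`, the variables `Sum.inr` the coordinates `X`. -/
noncomputable def inverseGraph (F : Fin 2 → MvPolynomial ι R) : MvPolynomial (Fin 2 ⊕ ι) R :=
  X (Sum.inl 0) * rename Sum.inr (F 1) - X (Sum.inl 1) * rename Sum.inr (F 0)

theorem eq_zero_of_inverseGraph_dvd_rename {F : Fin 2 → MvPolynomial ι R}
    (h : inverseGraph F ∣ rename Sum.inr (F 0)) : F 0 = 0 := by
  obtain ⟨c, hc⟩ := h
  have := congrArg (aeval (Sum.elim 0 X : Fin 2 ⊕ ι → MvPolynomial ι R)) hc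
  simpa only [inverseGraph, map_mul, map_sub, aeval_X, aeval_rename, Sum.elim_inl,
    Sum.elim_comp_inr, aeval_X_left_apply, Pi.zero_apply, zero_mul, sub_self] using this

theorem eq_zero_of_isHomogeneous_zero {F : Fin 2 → MvPolynomial ι R}
    (hF : ∀ i, (F i).IsHomogeneous 0) {u : ι → MvPolynomial (Fin 2) R}
    (h : X 0 * aeval u (F 1) = X 1 * aeval u (F 0)) : F 0 = 0 := by
  have hC (i : Fin 2) : F i = C (coeff 0 (F i)) :=
    totalDegree_eq_zero_iff_eq_C.mp (Nat.le_zero.mp (hF i).totalDegree_le)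
  rw [hC 0, hC 1, aeval_C, aeval_C, algebraMap_eq] at h
  rw [hC 0, (eq_zero_of_X_mul_C_eq_X_mul_C h).1, C_0]

variable [Fintype ι]

theorem aeval_substSyzygy_eq_zero [IsDomain R] {p : ι → MvPolynomial (Fin 2) R} {μ : ℕ}
    (hp : ∀ k, (p k).IsHomogeneous μ) {u : ι → MvPolynomial (Fin 2) R}
    (hsum : ∑ k, p k * u k = 0) {F : Fin 2 → MvPolynomial ι R}
    (h : X 0 * aeval u (F 1) = X 1 * aeval u (F 0)) : aeval u (substSyzygy p F) = 0 := by
  have key := pow_mul_aeval_substSyzygy hp h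
  have hX : (![X 0, X 1] : Fin 2 → MvPolynomial (Fin 2) R) = X := by
    ext i; fin_cases i <;> rfl
  simp only [hX, aeval_X_left_apply, hsum, mul_zero] at key
  exact (mul_eq_zero.mp key).resolve_left (pow_ne_zero _ (X_ne_zero 0))

theorem inverseGraph_dvd_of_substSyzygy_eq_zero {p : ι → MvPolynomial (Fin 2) R} {μ : ℕ}
    (hp : ∀ k, (p k).IsHomogeneous μ) {F : Fin 2 → MvPolynomial ι R}
    (h0 : substSyzygy p F = 0) :
    inverseGraph F ∣ rename Sum.inr (F 0) ^ μ * movingLine p := by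
  -- modulo `inverseGraph F` the parameters are proportional to `F(X)`
  set π := Ideal.Quotient.mkₐ R (Ideal.span {inverseGraph F})
  have hπ (Q : MvPolynomial ι R) :
      aeval (fun k ↦ π (X (Sum.inr k))) Q = π (rename Sum.inr Q) := by
    rw [rename_eq_aeval, comp_aeval_apply]
    rfl
  have hπ' (Q : MvPolynomial (Fin 2) R) :
      aeval (fun i ↦ π (X (Sum.inl i))) Q = π (rename Sum.inl Q) := by
    rw [rename_eq_aeval, comp_aeval_apply]
    rfl
  have hrel : π (X (Sum.inl 0)) * aeval (fun k ↦ π (X (Sum.inr k))) (F 1) =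
      π (X (Sum.inl 1)) * aeval (fun k ↦ π (X (Sum.inr k))) (F 0) := by
    rw [hπ, hπ, ← map_mul, ← map_mul, ← sub_eq_zero, ← map_sub]
    exact Ideal.Quotient.eq_zero_iff_mem.mpr (Ideal.mem_span_singleton_self _)
  have key := pow_mul_aeval_substSyzygy hp hrel
  have hxy : ![π (X (Sum.inl 0)), π (X (Sum.inl 1))] = fun i ↦ π (X (Sum.inl i)) := by
    ext i; fin_cases i <;> rfl
  rw [h0, map_zero, mul_zero, hxy] at key
  rw [← Ideal.mem_span_singleton, ← Ideal.Quotient.eq_zero_iff_mem]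
  change π _ = 0
  simp only [key, movingLine, hπ, hπ', map_mul, map_pow, map_sum]

theorem le_one_of_inverseGraph_dvd_movingLine [IsDomain R] {F : Fin 2 → MvPolynomial ι R}
    {ν : ℕ} (hF : ∀ i, (F i).IsHomogeneous ν) {p : ι → MvPolynomial (Fin 2) R} (hp : p ≠ 0)
    (h : inverseGraph F ∣ movingLine p) : ν ≤ 1 := by
  -- compare degrees in `X` alone, over the coefficient ring `R[T]`
  set θ : MvPolynomial (Fin 2 ⊕ ι) R →ₐ[R] MvPolynomial ι (MvPolynomial (Fin 2) R) :=
    aeval (Sum.elim (fun i ↦ C (X i)) X)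
  have hθG : θ (inverseGraph F) =
      C (X 0) * aeval (R := R) X (F 1) - C (X 1) * aeval (R := R) X (F 0) := by
    simp [θ, inverseGraph, aeval_rename]
  have hθL : θ (movingLine p) = ∑ k, C (p k) * X k := by
    have hC (q : MvPolynomial (Fin 2) R) :
        aeval (fun i ↦ C (X i)) q = (C q : MvPolynomial ι (MvPolynomial (Fin 2) R)) := by
      induction q using MvPolynomial.induction_on <;> simp_all
    simp [θ, movingLine, aeval_rename, hC]
  have hG : (θ (inverseGraph F)).IsHomogeneous ν := by
    rw [hθG]
    simpa using (((hF 1).aeval X (isHomogeneous_X _)).C_mul _).sub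
      (((hF 0).aeval X (isHomogeneous_X _)).C_mul _)
  have hL : (θ (movingLine p)).IsHomogeneous 1 := by
    rw [hθL]
    exact IsHomogeneous.sum _ _ _ fun k _ ↦ isHomogeneous_C_mul_X _ _
  have hL0 : θ (movingLine p) ≠ 0 := by
    classical
    obtain ⟨j, hj⟩ := Function.ne_iff.mp hp
    rw [hθL]
    intro h0
    apply hj
    simpa [coeff_sum, coeff_C_mul, coeff_X, Finsupp.single_eq_single_iff] using
      congrArg (coeff (Finsupp.single j 1)) h0
  exact hG.le_of_dvd hL (map_dvd θ h) hL0

theorem substSyzygy_ne_zero [IsDomain R] {F : Fin 2 → MvPolynomial ι R} {ν μ : ℕ}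
    (hG : Prime (inverseGraph F)) (hF : ∀ i, (F i).IsHomogeneous ν) (hF0 : F 0 ≠ 0)
    (hν : 2 ≤ ν) {p : ι → MvPolynomial (Fin 2) R} (hp : ∀ k, (p k).IsHomogeneous μ)
    (hp0 : p ≠ 0) : substSyzygy p F ≠ 0 := by
  intro h0
  rcases hG.dvd_or_dvd (inverseGraph_dvd_of_substSyzygy_eq_zero hp h0) with h | h
  · exact hF0 (eq_zero_of_inverseGraph_dvd_rename (hG.dvd_of_dvd_pow h))
  · have := le_one_of_inverseGraph_dvd_movingLine hF hp0 h
    omega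

theorem eq_zero_of_isHomogeneous_one {F : Fin 2 → MvPolynomial ι R}
    (hF : ∀ i, (F i).IsHomogeneous 1) {u : ι → MvPolynomial (Fin 2) R}
    (h : X 0 * aeval u (F 1) = X 1 * aeval u (F 0))
    (hmin : ∀ q : ι → MvPolynomial (Fin 2) R,
      (∀ k, (q k).IsHomogeneous 1) → ∑ k, q k * u k = 0 → q = 0) : F 0 = 0 := by
  have hspan (i : Fin 2) : ∃ a : ι → R, ∑ k, a k • X k = F i := by
    rw [← Submodule.mem_span_range_iff_exists_fun, ← homogeneousSubmodule_one_eq_span_X]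
    exact hF i
  choose a ha using hspan
  have haeval (i : Fin 2) : aeval u (F i) = ∑ k, C (a i k) * u k := by
    simp [← ha, smul_eq_C_mul]
  set q : ι → MvPolynomial (Fin 2) R := fun k ↦ X 0 * C (a 1 k) - X 1 * C (a 0 k)
  have hq : ∀ k, (q k).IsHomogeneous 1 := fun k ↦
    ((isHomogeneous_X _ _).mul (isHomogeneous_C _ _)).sub
      ((isHomogeneous_X _ _).mul (isHomogeneous_C _ _))
  have hsum : ∑ k, q k * u k = 0 := by
    rw [← sub_eq_zero.mpr h, haeval, haeval, Finset.mul_sum, Finset.mul_sum,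
      ← Finset.sum_sub_distrib]
    exact Finset.sum_congr rfl fun k _ ↦ by ring
  have ha0 (k : ι) : a 0 k = 0 :=
    (eq_zero_of_X_mul_C_eq_X_mul_C (sub_eq_zero.mp (congrFun (hmin q hq hsum) k))).1
  simp [← ha, ha0]

end CommRing

end Parametrization

open Parametrization

theorem stmt_15_general (K : Type*) [Field K] (d ν μ : ℕ)
    (u : Fin 3 → MvPolynomial (Fin 2) K)
    (F₁ F₂ : MvPolynomial (Fin 3) K)
    (hF₁ : F₁.IsHomogeneous ν) (hF₂ : F₂.IsHomogeneous ν)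
    (hrel : X 0 * aeval u F₂ = X 1 * aeval u F₁)
    (hFu : ¬(aeval u F₁ = 0 ∧ aeval u F₂ = 0))
    (hGirr : Irreducible
      (X (Sum.inl 0) * rename Sum.inr F₂ - X (Sum.inl 1) * rename Sum.inr F₁ :
        MvPolynomial (Fin 2 ⊕ Fin 3) K))
    (E : MvPolynomial (Fin 3) K) (hEdeg : E.IsHomogeneous d)
    (hEcurve : ∀ Q : MvPolynomial (Fin 3) K, aeval u Q = 0 ↔ E ∣ Q)
    -- `μ` is the minimal degree of a nonzero syzygy of `(u₁,u₂,u₃)`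
    (hsyz : ∃ p : Fin 3 → MvPolynomial (Fin 2) K,
      (∀ k, (p k).IsHomogeneous μ) ∧ p ≠ 0 ∧ ∑ k, p k * u k = 0)
    (hmin : ∀ μ' < μ, ∀ p : Fin 3 → MvPolynomial (Fin 2) K,
      (∀ k, (p k).IsHomogeneous μ') → ∑ k, p k * u k = 0 → p = 0)
    (hμd : 2 * μ ≤ d) (hμ : 1 < μ) :
    d ≤ μ * ν + 1 ∧ (ν = 2 → μ = d / 2) := by
  obtain ⟨p, hp, hp0, hsum⟩ := hsyz
  have hF : ∀ i, (![F₁, F₂] i).IsHomogeneous ν := by simp [Fin.forall_fin_two, hF₁, hF₂]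
  have hF₁0 : F₁ ≠ 0 := by
    rintro rfl
    rw [map_zero, mul_zero, mul_eq_zero] at hrel
    exact hFu ⟨map_zero _, hrel.resolve_left (X_ne_zero 0)⟩
  have hν : 2 ≤ ν := by
    by_contra! hν
    interval_cases ν
    · exact hF₁0 (eq_zero_of_isHomogeneous_zero hF hrel)
    · exact hF₁0 (eq_zero_of_isHomogeneous_one hF hrel (hmin 1 hμ))
  have hR0 : substSyzygy p ![F₁, F₂] ≠ 0 :=
    substSyzygy_ne_zero (F := ![F₁, F₂]) hGirr.prime hF hF₁0 hν hp hp0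
  have hER : E ∣ substSyzygy p ![F₁, F₂] :=
    (hEcurve _).mp (aeval_substSyzygy_eq_zero hp hsum hrel)
  have hd : d ≤ μ * ν + 1 := by
    have := hEdeg.le_of_dvd (isHomogeneous_substSyzygy hp hF) hER hR0
    rwa [mul_comm] at this
  exact ⟨hd, fun h ↦ by subst h; omega⟩

/-- Let `φ`, given by coprime `u₁,u₂,u₃` homogeneous of degree `d`, properly
parameterize the irreducible curve `E = 0` of degree `d`, with inverse
defined by coprime forms `F₁, F₂` of degree `ν` (so `T₁F₂(u) = T₂F₁(u)`,
`(F₁(u),F₂(u)) ≠ (0,0)`, and `T₁F₂(X) − T₂F₁(X)` is irreducible). Let `μ` be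
the minimal degree of a nonzero syzygy of `(u₁,u₂,u₃)`, with `0 < μ ≤ d/2`.
If `μ > 1` then `μν + 1 ≥ d`; in particular if `ν = 2` then `μ = ⌊d/2⌋`. -/
theorem stmt_15 (K : Type*) [Field K] [IsAlgClosed K] (d ν μ : ℕ)
    (u : Fin 3 → MvPolynomial (Fin 2) K)
    (hu : ∀ k, (u k).IsHomogeneous d)
    (hucop : ∀ g : MvPolynomial (Fin 2) K, (∀ k, g ∣ u k) → IsUnit g)
    (F₁ F₂ : MvPolynomial (Fin 3) K)
    (hF₁ : F₁.IsHomogeneous ν) (hF₂ : F₂.IsHomogeneous ν)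
    (hFcop : IsRelPrime F₁ F₂)
    (hrel : X 0 * aeval u F₂ = X 1 * aeval u F₁)
    (hFu : ¬(aeval u F₁ = 0 ∧ aeval u F₂ = 0))
    (hGirr : Irreducible
      (X (Sum.inl 0) * rename Sum.inr F₂ - X (Sum.inl 1) * rename Sum.inr F₁ :
        MvPolynomial (Fin 2 ⊕ Fin 3) K))
    (E : MvPolynomial (Fin 3) K) (hE : Irreducible E) (hEdeg : E.IsHomogeneous d)
    (hEcurve : ∀ Q : MvPolynomial (Fin 3) K, aeval u Q = 0 ↔ E ∣ Q)
    -- `μ` is the minimal degree of a nonzero syzygy of `(u₁,u₂,u₃)`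
    (hsyz : ∃ p : Fin 3 → MvPolynomial (Fin 2) K,
      (∀ k, (p k).IsHomogeneous μ) ∧ p ≠ 0 ∧ ∑ k, p k * u k = 0)
    (hmin : ∀ μ' < μ, ∀ p : Fin 3 → MvPolynomial (Fin 2) K,
      (∀ k, (p k).IsHomogeneous μ') → ∑ k, p k * u k = 0 → p = 0)
    (hμd : 2 * μ ≤ d) (hμ : 1 < μ) :
    d ≤ μ * ν + 1 ∧ (ν = 2 → μ = d / 2) :=
  stmt_15_general K d ν μ u F₁ F₂ hF₁ hF₂ hrel hFu hGirr E hEdeg hEcurve hsyz hmin hμd hμ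
end
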